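/- arXiv:1502.03469 — 4 statements merged into one kernel-verified Lean document; each statement's English description precedes it below -/
import Mathlib

section
/- Let N ≥ 1, τ ≥ 1, T ≥ 1. Let θ_i, θ_j : ℕ → Fin N be τ-periodic CH sequences such that for every clock drift d : ℕ there exists a < τ with θ_i(a) = θ_j(a + d) (the original CH protocol guarantees rendezvous under every drift). Let x be a wake-up schedule with period T having the neighbor-discovery property, with A = f(T) ≥ 1 and gcd(A, τ) = 1. Let θ'_i and θ'_j be interleavings of θ_i and θ_j along x. Then for every clock drift k : ℕ, there exists a slot t < τ·T with x(t) = true, x(t + k) = true, and θ'_i(t) = θ'_j(t + k); i.e., the interleaved CH sequences are guaranteed to rendezvous within τ·T slots (Theorem 1, part 1). -/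
/-- A `τ`-periodic function agrees on inputs with equal residues mod `τ`. -/
lemma periodic_mod_eq {α : Type*} {τ : ℕ} {g : ℕ → α}
    (hg : ∀ t, g (t + τ) = g t) {m n : ℕ} (h : m % τ = n % τ) : g m = g n := by
  have key : ∀ q a, g (a + q * τ) = g a := by
    intro q
    induction q with
    | zero => simp
    | succ q ih => intro a; have := hg (a + q * τ); rw [Nat.succ_mul, ← Nat.add_assoc, this, ih]
  have hm : g m = g (m % τ) := by
    conv_lhs => rw [← Nat.mod_add_div' m τ]
    exact key (m / τ) (m % τ)
  have hn : g n = g (n % τ) := by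
    conv_lhs => rw [← Nat.mod_add_div' n τ]
    exact key (n / τ) (n % τ)
  rw [hm, hn, h]

/-- **Theorem 1, part 1 (bounded TTR).**
If the original `τ`-periodic CH sequences `θi, θj` rendezvous under every clock
drift, and `x` is a `T`-periodic wake-up schedule with the neighbor-discovery
property whose awake count per period `A = f T` satisfies `A ≥ 1` and
`gcd (A, τ) = 1`, then the interleaved CH sequences `θi', θj'` are guaranteed
to rendezvous within `τ * T` slots under every clock drift `k`. -/
theorem interleaved_bounded_TTR (N τ T : ℕ) (hN : 1 ≤ N) (hτ : 1 ≤ τ) (hT : 1 ≤ T)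
    (θi θj : ℕ → Fin N)
    (hθi : ∀ t, θi (t + τ) = θi t) (hθj : ∀ t, θj (t + τ) = θj t)
    (hrdv : ∀ d : ℕ, ∃ a < τ, θi a = θj (a + d))
    (x : ℕ → Bool) (hx : ∀ t, x (t + T) = x t)
    (hnd : ∀ k : ℕ, ∃ t < T, x t = true ∧ x (t + k) = true)
    (f : ℕ → ℕ)
    (hf : ∀ t, f t = ((Finset.range t).filter (fun s => x s = true)).card)
    (A : ℕ) (hA : A = f T) (hA1 : 1 ≤ A) (hgcd : Nat.gcd A τ = 1)
    (θi' θj' : ℕ → Fin N)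
    (hθi' : ∀ t, x t = true → θi' t = θi (f t))
    (hθj' : ∀ t, x t = true → θj' t = θj (f t)) :
    ∀ k : ℕ, ∃ t < τ * T, x t = true ∧ x (t + k) = true ∧ θi' t = θj' (t + k) := by
  intro k
  -- step formula for f
  have hstep : ∀ n, f (n + 1) = f n + (if x n = true then 1 else 0) := by
    intro n
    rw [hf, hf, Finset.range_add_one, Finset.filter_insert]
    split
    next h => rw [Finset.card_insert_of_notMem (by simp)]
    next h => rw [Nat.add_zero]
  -- additivity: f (s + T) = f s + A
  have fadd : ∀ s, f (s + T) = f s + A := by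
    intro s
    induction s with
    | zero => simp [hA, hf]
    | succ s ih =>
      have : s + 1 + T = (s + T) + 1 := by ring
      rw [this, hstep, ih, hstep, hx s]
      ring
  -- iterated: f (s + m*T) = f s + m*A
  have fadd' : ∀ m s, f (s + m * T) = f s + m * A := by
    intro m
    induction m with
    | zero => simp
    | succ m ih =>
      intro s
      have : s + (m + 1) * T = (s + m * T) + T := by ring
      rw [this, fadd, ih]; ring
  -- x periodicity iterated
  have xper : ∀ m s, x (s + m * T) = x s := by
    intro m
    induction m with
    | zero => simp
    | succ m ih =>
      intro s
      have : s + (m + 1) * T = (s + m * T) + T := by ring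
      rw [this, hx, ih]
  -- monotonicity of f
  have fmono : ∀ s t : ℕ, s ≤ t → f s ≤ f t := by
    intro s t hst
    rw [hf, hf]
    exact Finset.card_le_card (Finset.filter_subset_filter _ (by simpa using hst))
  obtain ⟨t₀, ht₀T, hxt₀, hxt₀k⟩ := hnd k
  set d := f (t₀ + k) - f t₀ with hd
  have hdk : f (t₀ + k) = f t₀ + d := by
    have := fmono t₀ (t₀ + k) (by omega); omega
  obtain ⟨a, haτ, hra⟩ := hrdv d
  haveI : NeZero τ := ⟨by omega⟩
  set u := ZMod.unitOfCoprime A hgcd with hu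
  set m := (((a : ZMod τ) - (f t₀ : ZMod τ)) * ((u⁻¹ : (ZMod τ)ˣ) : ZMod τ)).val with hm
  have hmτ : m < τ := ZMod.val_lt _
  refine ⟨t₀ + m * T, ?_, ?_, ?_, ?_⟩
  · calc t₀ + m * T < T + m * T := by omega
    _ ≤ T + (τ - 1) * T := by nlinarith [Nat.le_sub_one_of_lt hmτ]
    _ = τ * T := by cases τ with | zero => omega | succ n => simp [Nat.succ_mul]; ring
  · rw [xper]; exact hxt₀
  · have : t₀ + m * T + k = (t₀ + k) + m * T := by ring
    rw [this, xper]; exact hxt₀k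
  · -- main congruence
    have hcong : ((f t₀ + m * A : ℕ) : ZMod τ) = (a : ZMod τ) := by
      push_cast
      rw [hm, ZMod.natCast_val, ZMod.cast_id]
      have hAu : (A : ZMod τ) = (u : ZMod τ) := (ZMod.coe_unitOfCoprime A hgcd).symm
      rw [hAu]
      have h1 : ((u⁻¹ : (ZMod τ)ˣ) : ZMod τ) * (u : ZMod τ) = 1 := u.inv_mul
      calc (f t₀ : ZMod τ) + ((a : ZMod τ) - (f t₀ : ZMod τ)) * ((u⁻¹ : (ZMod τ)ˣ) : ZMod τ) * (u : ZMod τ)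
          = (f t₀ : ZMod τ) + ((a : ZMod τ) - (f t₀ : ZMod τ)) * (((u⁻¹ : (ZMod τ)ˣ) : ZMod τ) * (u : ZMod τ)) := by ring
        _ = (a : ZMod τ) := by rw [h1]; ring
    have hmod : (f t₀ + m * A) % τ = a % τ :=
      (ZMod.natCast_eq_natCast_iff _ _ _).mp hcong
    have hfi : f (t₀ + m * T) = f t₀ + m * A := fadd' m t₀
    have hfj : f (t₀ + m * T + k) = f t₀ + d + m * A := by
      have : t₀ + m * T + k = (t₀ + k) + m * T := by ring
      rw [this, fadd' m, hdk]
    have hxi : x (t₀ + m * T) = true := by rw [xper]; exact hxt₀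
    have hxj : x (t₀ + m * T + k) = true := by
      have : t₀ + m * T + k = (t₀ + k) + m * T := by ring
      rw [this, xper]; exact hxt₀k
    rw [hθi' _ hxi, hθj' _ hxj, hfi, hfj]
    have e1 : θi (f t₀ + m * A) = θi a := periodic_mod_eq hθi hmod
    have e2 : θj (f t₀ + d + m * A) = θj (a + d) := by
      apply periodic_mod_eq hθj
      have : f t₀ + d + m * A = (f t₀ + m * A) + d := by ring
      rw [this, Nat.add_mod, hmod, ← Nat.add_mod]
    rw [e1, e2, hra]
end

section
/- Let N ≥ 1, τ ≥ 1, T ≥ 1. Let θ_i, θ_j : ℕ → Fin N be τ-periodic CH sequences, let x be a wake-up schedule with period T, with A = f(T) ≥ 1 and gcd(A, τ) = 1, and let θ'_i, θ'_j be interleavings of θ_i, θ_j along x. Fix a clock drift k : ℕ and suppose t₀ < T satisfies x(t₀) = true and x(t₀ + k) = true, and set d = f(t₀ + k) − f(t₀). Then every rendezvous channel of the original sequences under drift d is a rendezvous channel of the interleaved sequences under drift k; that is, {c : Fin N | ∃ a < τ, θ_i(a) = c ∧ θ_j(a + d) = c} ⊆ {c : Fin N | ∃ t < τ·T, x(t)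 = true ∧ x(t + k) = true ∧ θ'_i(t) = c ∧ θ'_j(t + k) = c}. In particular the interleaved sequences achieve at least the rendezvous diversity of the original sequences (Theorem 1, part 2). -/
/-- A `T`-periodic function is `m*T`-periodic. -/
lemma periodic_mul_aux {α : Type*} (g : ℕ → α) (T : ℕ) (h : ∀ t, g (t + T) = g t) :
    ∀ m t, g (t + m * T) = g t := by
  intro m
  induction m with
  | zero => simp
  | succ n ih =>
      intro t
      have : t + (n + 1) * T = (t + n * T) + T := by ring
      rw [this, h, ih]

/-- A `τ`-periodic function is constant on residue classes. -/
lemma periodic_modEq_aux {α : Type*} (g : ℕ → α) (τ : ℕ) (h : ∀ t, g (t + τ) = g t)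
    {u v : ℕ} (huv : u ≡ v [MOD τ]) : g u = g v := by
  rcases le_total u v with hle | hle
  · obtain ⟨n, hn⟩ := (Nat.modEq_iff_dvd' hle).mp huv
    have hv : v = u + n * τ := by rw [Nat.mul_comm]; omega
    rw [hv, periodic_mul_aux g τ h]
  · obtain ⟨n, hn⟩ := (Nat.modEq_iff_dvd' hle).mp huv.symm
    have hu : u = v + n * τ := by rw [Nat.mul_comm]; omega
    rw [hu, periodic_mul_aux g τ h]

/-- **Theorem 1, part 2 (diversity preservation, channel-wise form).**
Fix a clock drift `k` and an awake slot `t₀ < T` with `x t₀ = x (t₀ + k) = true`,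
and set `d = f (t₀ + k) - f t₀`. Then every rendezvous channel of the original
sequences `θi, θj` under drift `d` is a rendezvous channel of the interleaved
sequences `θi', θj'` under drift `k`, witnessed within `τ * T` slots. -/
theorem interleaved_diversity_subset (N τ T : ℕ) (hN : 1 ≤ N) (hτ : 1 ≤ τ) (hT : 1 ≤ T)
    (θi θj : ℕ → Fin N)
    (hθi : ∀ t, θi (t + τ) = θi t) (hθj : ∀ t, θj (t + τ) = θj t)
    (x : ℕ → Bool) (hx : ∀ t, x (t + T) = x t)
    (f : ℕ → ℕ)
    (hf : ∀ t, f t = ((Finset.range t).filter (fun s => x s = true)).card)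
    (A : ℕ) (hA : A = f T) (hA1 : 1 ≤ A) (hgcd : Nat.gcd A τ = 1)
    (θi' θj' : ℕ → Fin N)
    (hθi' : ∀ t, x t = true → θi' t = θi (f t))
    (hθj' : ∀ t, x t = true → θj' t = θj (f t))
    (k : ℕ) (t₀ : ℕ) (ht₀T : t₀ < T)
    (ht₀ : x t₀ = true) (ht₀k : x (t₀ + k) = true)
    (d : ℕ) (hd : d = f (t₀ + k) - f t₀) :
    {c : Fin N | ∃ a < τ, θi a = c ∧ θj (a + d) = c} ⊆
      {c : Fin N | ∃ t < τ * T,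
        x t = true ∧ x (t + k) = true ∧ θi' t = c ∧ θj' (t + k) = c} := by
  -- basic facts about f
  have hstep : ∀ t, f (t + 1) = f t + (if x t = true then 1 else 0) := by
    intro t
    rw [hf, hf, Finset.range_add_one, Finset.filter_insert]
    split
    · rw [Finset.card_insert_of_notMem (by simp)]
    · simp
  have hfT : ∀ t, f (t + T) = f t + A := by
    intro t
    induction t with
    | zero => simp [hA, hf]
    | succ n ih =>
        have h1 : n + 1 + T = (n + T) + 1 := by ring
        rw [h1, hstep, ih, hstep, hx]
        omega
  have hfmT : ∀ m t, f (t + m * T) = f t + m * A := by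
    intro m
    induction m with
    | zero => simp
    | succ n ih =>
        intro t
        have h1 : t + (n + 1) * T = (t + n * T) + T := by ring
        rw [h1, hfT, ih]
        ring
  have hmono : f t₀ ≤ f (t₀ + k) := by
    rw [hf, hf]
    exact Finset.card_le_card (Finset.filter_subset_filter _
      (Finset.range_subset_range.mpr (by omega)))
  have hfd : f (t₀ + k) = f t₀ + d := by omega
  -- set up ZMod
  haveI : NeZero τ := ⟨by omega⟩
  intro c hc
  obtain ⟨a, haτ, hia, hja⟩ := hc
  set u : ZMod τ := ((a : ZMod τ) - (f t₀ : ZMod τ)) * (A : ZMod τ)⁻¹ with hu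
  set m := u.val with hm
  have hmτ : m < τ := ZMod.val_lt u
  have hAinv : (A : ZMod τ) * (A : ZMod τ)⁻¹ = 1 :=
    ZMod.coe_mul_inv_eq_one A hgcd
  have hcast : ((f t₀ + m * A : ℕ) : ZMod τ) = ((a : ℕ) : ZMod τ) := by
    push_cast
    have hmval : ((m : ℕ) : ZMod τ) = u := by
      rw [hm, ZMod.natCast_val, ZMod.cast_id]
    rw [hmval, hu, mul_assoc, mul_comm ((A : ZMod τ))⁻¹, hAinv, mul_one]
    ring
  have hmodeq : f t₀ + m * A ≡ a [MOD τ] :=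
    (ZMod.natCast_eq_natCast_iff _ _ _).mp hcast
  refine ⟨t₀ + m * T, ?_, ?_, ?_, ?_, ?_⟩
  · have : m + 1 ≤ τ := hmτ
    nlinarith
  · rw [periodic_mul_aux x T hx m t₀]; exact ht₀
  · have h1 : t₀ + m * T + k = (t₀ + k) + m * T := by ring
    rw [h1, periodic_mul_aux x T hx m (t₀ + k)]; exact ht₀k
  · rw [hθi' _ (by rw [periodic_mul_aux x T hx m t₀]; exact ht₀), hfmT]
    rw [periodic_modEq_aux θi τ hθi hmodeq]
    exact hia
  · have h1 : t₀ + m * T + k = (t₀ + k) + m * T := by ring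
    have hxt : x (t₀ + m * T + k) = true := by
      rw [h1, periodic_mul_aux x T hx m (t₀ + k)]; exact ht₀k
    rw [hθj' _ hxt, h1, hfmT, hfd]
    have hmodeq2 : f t₀ + d + m * A ≡ a + d [MOD τ] := by
      have := hmodeq.add_right d
      have he : f t₀ + d + m * A = f t₀ + m * A + d := by ring
      rw [he]; exact this
    rw [periodic_modEq_aux θj τ hθj hmodeq2]
    exact hja
end

section
/- Let N ≥ 1, τ ≥ 1, T ≥ 1. Let θ_i, θ_j : ℕ → Fin N be τ-periodic CH sequences, let x be a wake-up schedule with period T having the neighbor-discovery property, with A = f(T) ≥ 1 and gcd(A, τ) = 1, and let θ'_i, θ'_j be interleavings of θ_i, θ_j along x. Then for every clock drift k : ℕ, the number of rendezvous channels of the interleaved sequences under drift k is at least the minimum over all drifts d < τ of the number of rendezvous channels of the original sequences under drift d: card {c : Fin N | ∃ t, x(t) = true ∧ x(t + k) = true ∧ θ'_i(t) = c ∧ θ'_j(t + k) = c} ≥ min_{d < τ} card {c : Fin N | ∃ a < τ, θ_i(a) = c ∧ θ_j(a + d) = c}. -/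
lemma periodic_mul' {α : Type*} (τ : ℕ) (θ : ℕ → α) (h : ∀ t, θ (t + τ) = θ t) :
    ∀ n t, θ (t + n * τ) = θ t := by
  intro n
  induction n with
  | zero => simp
  | succ n ih => intro t; rw [Nat.succ_mul, ← Nat.add_assoc, h, ih]

lemma periodic_congr' {α : Type*} (τ : ℕ) (θ : ℕ → α) (h : ∀ t, θ (t + τ) = θ t) :
    ∀ s t, s ≡ t [MOD τ] → θ s = θ t := by
  have key : ∀ s t, s ≤ t → s ≡ t [MOD τ] → θ s = θ t := by
    intro s t hle hmod
    obtain ⟨n, hn⟩ := (Nat.modEq_iff_dvd' hle).mp hmod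
    have : t = s + n * τ := by rw [Nat.mul_comm]; omega
    rw [this, periodic_mul' τ θ h]
  intro s t hmod
  rcases le_total s t with hle | hle
  · exact key s t hle hmod
  · exact (key t s hle hmod.symm).symm

/-- **Theorem 1, part 2 (diversity preservation, cardinality form).**
Under the neighbor-discovery property of the wake-up schedule and the
coprimality condition `gcd (A, τ) = 1`, for every clock drift `k` the number of
rendezvous channels of the interleaved sequences under drift `k` is at least
the minimum, over all drifts `d < τ`, of the number of rendezvous channels of
the original sequences under drift `d`. -/
theorem interleaved_diversity_card (N τ T : ℕ) (hN : 1 ≤ N) (hτ : 1 ≤ τ) (hT : 1 ≤ T)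
    (θi θj : ℕ → Fin N)
    (hθi : ∀ t, θi (t + τ) = θi t) (hθj : ∀ t, θj (t + τ) = θj t)
    (x : ℕ → Bool) (hx : ∀ t, x (t + T) = x t)
    (hnd : ∀ k : ℕ, ∃ t < T, x t = true ∧ x (t + k) = true)
    (f : ℕ → ℕ)
    (hf : ∀ t, f t = ((Finset.range t).filter (fun s => x s = true)).card)
    (A : ℕ) (hA : A = f T) (hA1 : 1 ≤ A) (hgcd : Nat.gcd A τ = 1)
    (θi' θj' : ℕ → Fin N)
    (hθi' : ∀ t, x t = true → θi' t = θi (f t))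
    (hθj' : ∀ t, x t = true → θj' t = θj (f t)) :
    ∀ k : ℕ,
      Set.ncard {c : Fin N |
          ∃ t, x t = true ∧ x (t + k) = true ∧ θi' t = c ∧ θj' (t + k) = c} ≥
        (Finset.range τ).inf'
          (Finset.nonempty_range_iff.mpr (Nat.one_le_iff_ne_zero.mp hτ))
          (fun d => Set.ncard {c : Fin N | ∃ a < τ, θi a = c ∧ θj (a + d) = c}) := by
  intro k
  haveI : NeZero τ := ⟨by omega⟩
  -- periodicity of x with multiples
  have hxm : ∀ m t, x (t + m * T) = x t := periodic_mul' T x hx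
  -- f (t + T) = f t + A
  have hfT : ∀ t, f (t + T) = f t + A := by
    intro t
    induction t with
    | zero => simp [hA, hf]
    | succ t ih =>
      have e1 : t + 1 + T = (t + T) + 1 := by omega
      rw [e1, hf ((t+T)+1), hf (t+1), Finset.range_add_one, Finset.range_add_one,
        Finset.filter_insert, Finset.filter_insert, hx t]
      by_cases h : x t = true
      · rw [if_pos h, if_pos h, Finset.card_insert_of_notMem (by simp),
          Finset.card_insert_of_notMem (by simp), ← hf, ← hf, ih]
        omega
      · rw [if_neg h, if_neg h, ← hf, ← hf, ih]
  have hfm : ∀ m t, f (t + m * T) = f t + m * A := by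
    intro m
    induction m with
    | zero => simp
    | succ m ih =>
      intro t
      have : t + (m + 1) * T = (t + m * T) + T := by ring
      rw [this, hfT, ih]; ring
  -- f monotone
  have hfmono : ∀ s t, s ≤ t → f s ≤ f t := by
    intro s t hst
    rw [hf, hf]
    exact Finset.card_le_card (Finset.filter_subset_filter _ (Finset.range_subset_range.mpr hst))
  obtain ⟨t₀, ht₀T, hxt₀, hxt₀k⟩ := hnd k
  set a₀ := f t₀ with ha₀
  set δ := f (t₀ + k) - a₀ with hδ
  have hb₀ : f (t₀ + k) = a₀ + δ := by
    have := hfmono t₀ (t₀ + k) (by omega); omega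
  set d := δ % τ with hd
  have hdτ : d < τ := Nat.mod_lt _ (by omega)
  -- the inf' is ≤ value at d
  have hinf : (Finset.range τ).inf'
      (Finset.nonempty_range_iff.mpr (Nat.one_le_iff_ne_zero.mp hτ))
      (fun d => Set.ncard {c : Fin N | ∃ a < τ, θi a = c ∧ θj (a + d) = c}) ≤
      Set.ncard {c : Fin N | ∃ a < τ, θi a = c ∧ θj (a + d) = c} :=
    Finset.inf'_le _ (Finset.mem_range.mpr hdτ)
  refine le_trans hinf ?_
  apply Set.ncard_le_ncard _ (Set.toFinite _)
  rintro c ⟨a, haτ, hia, hja⟩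
  -- find m with a₀ + m*A ≡ a [MOD τ]
  have hunit : IsUnit (A : ZMod τ) := by
    rw [ZMod.isUnit_iff_coprime]
    exact hgcd
  set m := ((a : ZMod τ) - (a₀ : ZMod τ)) * (A : ZMod τ)⁻¹ |>.val with hm
  have hcong : a₀ + m * A ≡ a [MOD τ] := by
    rw [← ZMod.natCast_eq_natCast_iff]
    push_cast
    rw [hm, ZMod.natCast_val, ZMod.cast_id]
    rw [mul_assoc, ZMod.inv_mul_of_unit _ hunit, mul_one]
    ring
  refine ⟨t₀ + m * T, by rw [hxm]; exact hxt₀, ?_, ?_, ?_⟩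
  · have : t₀ + m * T + k = (t₀ + k) + m * T := by ring
    rw [this, hxm]; exact hxt₀k
  · rw [hθi' _ (by rw [hxm]; exact hxt₀), hfm]
    rw [periodic_congr' τ θi hθi _ a hcong]; exact hia
  · have e : t₀ + m * T + k = (t₀ + k) + m * T := by ring
    have hx2 : x (t₀ + m * T + k) = true := by rw [e, hxm]; exact hxt₀k
    rw [hθj' _ hx2, e, hfm, hb₀]
    have hcong2 : a₀ + δ + m * A ≡ a + d [MOD τ] := by
      have h1 : a₀ + m * A + δ ≡ a + d [MOD τ] :=
        Nat.ModEq.add hcong ((Nat.mod_modEq δ τ).symm)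
      calc a₀ + δ + m * A = a₀ + m * A + δ := by ring
        _ ≡ a + d [MOD τ] := h1
    rw [periodic_congr' τ θj hθj _ _ hcong2]; exact hja
end

section
/- Let N ≥ 1, τ ≥ 1, T ≥ 1. Let θ_i, θ_j : ℕ → Fin N be τ-periodic CH sequences, let x be a wake-up schedule with period T with A = f(T) ≥ 1 and gcd(A, τ) = 1, and let θ'_i, θ'_j be interleavings of θ_i, θ_j along x. Fix a clock drift k : ℕ and suppose t₀ satisfies x(t₀) = true and x(t₀ + k) = true, and set d = f(t₀ + k) − f(t₀). Then the number of sampled slots among {a·T + t₀ : a < τ} at which the interleaved sequences rendezvous under drift k equals the number of rendezvous slots per period of the original sequences under drift d: card {a < τ | θ'_i(a·T + t₀) = θ'_j(a·T + t₀ + k)} = card {a < τ | θ_i(a) = θ_j(a + d)}. -/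
/-!
Since `x` is `T`-periodic, the awake count grows by exactly `A` per period, so the `a`-th sampled
slot `a * T + t₀` is awake and the interleaved sequences read the original ones at positions
`f t₀ + a * A` and `f t₀ + a * A + d`. As `A` is a unit modulo `τ`, `a ↦ f t₀ + a * A` permutes
the residues modulo `τ`, and the rendezvous predicate `θi b = θj (b + d)` is `τ`-periodic in `b`,
so the two counts agree.
-/

open Finset Function

theorem Nat.count_mul_add_of_periodic {p : ℕ → Prop} [DecidablePred p] {T : ℕ}
    (hp : Periodic p T) (a t : ℕ) :
    Nat.count p (a * T + t) = a * Nat.count p T + Nat.count p t := by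
  induction a with
  | zero => simp
  | succ a ih =>
    rw [show (a + 1) * T + t = T + (a * T + t) by ring, Nat.count_add]
    simp only [add_comm T, show ∀ k, p (k + T) = p k from hp, ih]
    ring

theorem Nat.Coprime.injOn_add_mul_mod_range {A τ : ℕ} (hA : Nat.Coprime A τ) (c : ℕ) :
    Set.InjOn (fun a => (c + a * A) % τ) (range τ) := by
  intro a ha a' ha' h
  have hmul : a * A ≡ a' * A [MOD τ] := Nat.ModEq.add_left_cancel' c h
  exact (hmul.cancel_right_of_coprime (Nat.coprime_comm.mp hA)).eq_of_lt_of_lt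
    (mem_range.mp ha) (mem_range.mp ha')

theorem Function.Periodic.card_filter_range_add_mul_of_coprime {P : ℕ → Prop} [DecidablePred P]
    {τ A : ℕ} (hP : Periodic P τ) (hA : Nat.Coprime A τ) (c : ℕ) :
    #{a ∈ range τ | P (c + a * A)} = #{b ∈ range τ | P b} := by
  rcases Nat.eq_zero_or_pos τ with rfl | hτ
  · simp
  have hmaps : Set.MapsTo (fun a => (c + a * A) % τ) (range τ) (range τ) :=
    fun a _ => mem_range.mpr (Nat.mod_lt _ hτ)
  have hinj := hA.injOn_add_mul_mod_range c
  rw [card_filter, card_filter]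
  exact sum_nbij _ hmaps hinj (surjOn_of_injOn_of_card_le _ hmaps hinj le_rfl)
    fun a _ => by simp only [hP.map_mod_nat]

theorem sampled_rendezvous_count_general (N τ T : ℕ)
    (θi θj : ℕ → Fin N)
    (hθi : ∀ t, θi (t + τ) = θi t) (hθj : ∀ t, θj (t + τ) = θj t)
    (x : ℕ → Bool) (hx : ∀ t, x (t + T) = x t)
    (f : ℕ → ℕ)
    (hf : ∀ t, f t = ((Finset.range t).filter (fun s => x s = true)).card)
    (A : ℕ) (hA : A = f T) (hgcd : Nat.gcd A τ = 1)
    (θi' θj' : ℕ → Fin N)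
    (hθi' : ∀ t, x t = true → θi' t = θi (f t))
    (hθj' : ∀ t, x t = true → θj' t = θj (f t))
    (k : ℕ) (t₀ : ℕ) (ht₀ : x t₀ = true) (ht₀k : x (t₀ + k) = true)
    (d : ℕ) (hd : d = f (t₀ + k) - f t₀) :
    ((Finset.range τ).filter
        (fun a => θi' (a * T + t₀) = θj' (a * T + t₀ + k))).card
      = ((Finset.range τ).filter (fun a => θi a = θj (a + d))).card := by
  have hawake : Periodic (fun s => x s = true) T := fun s => congrArg (· = true) (hx s)
  have hf_count : f = Nat.count (fun s => x s = true) :=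
    funext fun t => (hf t).trans (Nat.count_eq_card_filter_range _ t).symm
  have hf_shift (a t : ℕ) : f (a * T + t) = f t + a * A := by
    rw [hf_count, Nat.count_mul_add_of_periodic hawake, ← hf_count, hA]
    ring
  have hx_shift (a t : ℕ) : x (a * T + t) = x t := by
    simpa [add_comm] using (show Periodic x T from hx).nat_mul a t
  have hf_drift : f (t₀ + k) = f t₀ + d := by
    have : f t₀ ≤ f (t₀ + k) := by
      rw [hf_count]; exact Nat.count_monotone _ (Nat.le_add_right t₀ k)
    omega
  have hP : Periodic (fun b => θi b = θj (b + d)) τ := fun b => by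
    simp only [add_right_comm b τ d, hθi, hθj]
  rw [← hP.card_filter_range_add_mul_of_coprime hgcd (f t₀)]
  congr 1
  refine filter_congr fun a _ => ?_
  rw [hθi' _ (by rwa [hx_shift]), add_assoc, hθj' _ (by rwa [hx_shift]), hf_shift, hf_shift,
    hf_drift, add_right_comm]

/-- **Sampled rendezvous-slot count (proof of Theorem 1).**
Fix a clock drift `k` and an awake slot `t₀` with `x t₀ = x (t₀ + k) = true`,
and set `d = f (t₀ + k) - f t₀`. With `gcd (A, τ) = 1`, the number of sampled
slots among `{a * T + t₀ : a < τ}` at which the interleaved sequences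
rendezvous under drift `k` equals the number of rendezvous slots per period of
the original sequences under drift `d`. -/
theorem sampled_rendezvous_count (N τ T : ℕ) (hN : 1 ≤ N) (hτ : 1 ≤ τ) (hT : 1 ≤ T)
    (θi θj : ℕ → Fin N)
    (hθi : ∀ t, θi (t + τ) = θi t) (hθj : ∀ t, θj (t + τ) = θj t)
    (x : ℕ → Bool) (hx : ∀ t, x (t + T) = x t)
    (f : ℕ → ℕ)
    (hf : ∀ t, f t = ((Finset.range t).filter (fun s => x s = true)).card)
    (A : ℕ) (hA : A = f T) (hA1 : 1 ≤ A) (hgcd : Nat.gcd A τ = 1)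
    (θi' θj' : ℕ → Fin N)
    (hθi' : ∀ t, x t = true → θi' t = θi (f t))
    (hθj' : ∀ t, x t = true → θj' t = θj (f t))
    (k : ℕ) (t₀ : ℕ) (ht₀ : x t₀ = true) (ht₀k : x (t₀ + k) = true)
    (d : ℕ) (hd : d = f (t₀ + k) - f t₀) :
    ((Finset.range τ).filter
        (fun a => θi' (a * T + t₀) = θj' (a * T + t₀ + k))).card
      = ((Finset.range τ).filter (fun a => θi a = θj (a + d))).card :=
  sampled_rendezvous_count_general N τ T θi θj hθi hθj x hx f hf A hA hgcd θi' θj' hθi' hθj' k t₀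
    ht₀ ht₀k d hd
end
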